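/- For every complex number x and every integer p, ∑_{ν ∈ ℤ} J_{3ν+p}(x) = (1/3)[1 + 2 cos(x√3/2 − 2πp/3)]. -/

import Mathlib

open scoped Real

/-- Bessel function of the first kind of natural order `n`, via its power series. -/
noncomputable def besselJNat (n : ℕ) (x : ℂ) : ℂ :=
  ∑' m : ℕ, (-1 : ℂ) ^ m / ((m.factorial : ℂ) * ((m + n).factorial : ℂ)) * (x / 2) ^ (2 * m + n)

/-- Bessel function of the first kind of integer order, with `J_{-n} = (-1)^n J_n`. -/
noncomputable def besselJ (n : ℤ) (x : ℂ) : ℂ :=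
  if 0 ≤ n then besselJNat n.toNat x else (-1 : ℂ) ^ n.natAbs * besselJNat n.natAbs x

/-!
Multiplying the exponential series of `exp (x t / 2)` and `exp (-x / (2 t))` and collecting
powers of `t` gives the generating function `∑ₙ Jₙ(x) tⁿ = exp (x / 2 * (t - t⁻¹))` for `t ≠ 0`.
Averaging it over the cube roots of unity `t = ωᵏ` with weights `ω^(-k p)` keeps exactly the
orders `n ≡ p (mod 3)`. Since `ω - ω⁻¹ = i√3`, the three averaged terms are `1`, `e^{iθ}` and
`e^{-iθ}` with `θ = x√3/2 - 2πp/3`.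
-/

open scoped Nat
open Complex Finset

/-- `1 / (m + n)!` is read as `1 / Γ(m + n + 1) = 0` when `m + n < 0`. -/
noncomputable def besselTerm (n : ℤ) (x : ℂ) (m : ℕ) : ℂ :=
  if 0 ≤ (m : ℤ) + n then
    (-1) ^ m / (m ! * ((m + n).toNat)! : ℂ) * (x / 2) ^ (m + ((m : ℤ) + n).toNat)
  else 0

theorem besselTerm_of_neg {n : ℤ} {m : ℕ} (h : (m : ℤ) + n < 0) (x : ℂ) :
    besselTerm n x m = 0 :=
  if_neg h.not_ge

theorem besselTerm_natCast (n m : ℕ) (x : ℂ) :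
    besselTerm n x m = (-1) ^ m / (m ! * (m + n)! : ℂ) * (x / 2) ^ (2 * m + n) := by
  rw [besselTerm, if_pos (by positivity), show ((m : ℤ) + n).toNat = m + n by omega,
    show m + (m + n) = 2 * m + n by ring]

theorem besselTerm_neg_natCast_add (n m : ℕ) (x : ℂ) :
    besselTerm (-n) x (m + n)
      = (-1) ^ n * ((-1) ^ m / (m ! * (m + n)! : ℂ) * (x / 2) ^ (2 * m + n)) := by
  rw [besselTerm, if_pos (by omega), show (((m + n : ℕ) : ℤ) + -n).toNat = m by omega,
    show m + n + m = 2 * m + n by ring, pow_add]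
  ring

theorem besselJ_neg_natCast (n : ℕ) (x : ℂ) : besselJ (-n) x = (-1) ^ n * besselJNat n x := by
  rcases n.eq_zero_or_pos with rfl | hn
  · simp [besselJ]
  · rw [besselJ, if_neg (by omega), Int.natAbs_neg, Int.natAbs_natCast]

theorem besselJ_eq_tsum_besselTerm (n : ℤ) (x : ℂ) : besselJ n x = ∑' m, besselTerm n x m := by
  rcases n.eq_nat_or_neg with ⟨a, rfl | rfl⟩
  · simp [besselJ, besselJNat, besselTerm_natCast]
  · have hsupp : Function.support (besselTerm (-a) x) ⊆ Set.range (· + a) := fun m hm =>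
      ⟨m - a, by
        by_contra h
        exact hm (besselTerm_of_neg (by simp only at h; omega) x)⟩
    rw [besselJ_neg_natCast, besselJNat, ← (add_left_injective a).tsum_eq hsupp, ← tsum_mul_left]
    simp only [besselTerm_neg_natCast_add]

theorem besselTerm_sub_mul_zpow (x : ℂ) {t : ℂ} (ht : t ≠ 0) (j k : ℕ) :
    besselTerm ((j : ℤ) - k) x k * t ^ ((j : ℤ) - k)
      = (x / 2 * t) ^ j / j ! * ((-(x / 2) * t⁻¹) ^ k / k !) := by
  rw [besselTerm, if_pos (by omega), show ((k : ℤ) + (j - k)).toNat = j by omega,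
    zpow_sub₀ ht, zpow_natCast, zpow_natCast, pow_add, mul_pow, mul_pow, neg_pow (x / 2), inv_pow]
  field_simp

theorem hasSum_besselTerm_mul_zpow (x : ℂ) {t : ℂ} (ht : t ≠ 0) :
    HasSum (fun q : ℤ × ℕ => besselTerm q.1 x q.2 * t ^ q.1) (exp (x / 2 * (t - t⁻¹))) := by
  have hexp : ∀ z : ℂ, HasSum (fun j : ℕ => z ^ j / j !) (exp z) := fun z => by
    rw [exp_eq_exp_ℂ]; exact NormedSpace.expSeries_div_hasSum_exp z
  have hsummable := summable_mul_of_summable_norm (R := ℂ)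
    (NormedSpace.norm_expSeries_div_summable (x / 2 * t))
    (NormedSpace.norm_expSeries_div_summable (-(x / 2) * t⁻¹))
  have hprod := (hexp (x / 2 * t)).mul (hexp (-(x / 2) * t⁻¹)) hsummable
  rw [← exp_add (x / 2 * t), show x / 2 * t + -(x / 2) * t⁻¹ = x / 2 * (t - t⁻¹) by ring] at hprod
  have hinj : Function.Injective fun jk : ℕ × ℕ => ((jk.1 : ℤ) - jk.2, jk.2) := by
    rintro ⟨j, k⟩ ⟨j', k'⟩ h
    simp only [Prod.mk.injEq] at h ⊢
    omega
  refine (hinj.hasSum_iff ?_).mp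
    (hprod.congr_fun fun jk => besselTerm_sub_mul_zpow x ht jk.1 jk.2)
  rintro ⟨n, m⟩ hq
  have : (m : ℤ) + n < 0 := by
    by_contra h
    exact hq ⟨((m + n).toNat, m), Prod.ext (by dsimp only; omega) rfl⟩
  rw [besselTerm_of_neg this, zero_mul]

theorem hasSum_besselJ_mul_zpow (x : ℂ) {t : ℂ} (ht : t ≠ 0) :
    HasSum (fun n : ℤ => besselJ n x * t ^ n) (exp (x / 2 * (t - t⁻¹))) := by
  have hF := hasSum_besselTerm_mul_zpow x ht
  refine hF.prod_fiberwise fun n => ?_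
  rw [besselJ_eq_tsum_besselTerm, ← tsum_mul_right]
  exact (hF.summable.prod_factor n).hasSum

theorem IsPrimitiveRoot.sum_pow_zpow_eq_ite {K : Type*} [Field K] {ζ : K} {N : ℕ}
    (hζ : IsPrimitiveRoot ζ N) (d : ℤ) :
    ∑ k ∈ range N, (ζ ^ k) ^ d = if (N : ℤ) ∣ d then (N : K) else 0 := by
  have hswap : ∀ k : ℕ, (ζ ^ k) ^ d = (ζ ^ d) ^ k := fun k => by
    rw [← zpow_natCast, ← zpow_natCast, ← zpow_mul, ← zpow_mul, mul_comm]
  simp only [hswap]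
  split_ifs with hd
  · simp [(hζ.zpow_eq_one_iff_dvd d).mpr hd]
  · have hne : ζ ^ d - 1 ≠ 0 := sub_ne_zero.mpr fun h => hd ((hζ.zpow_eq_one_iff_dvd d).mp h)
    have hpow : (ζ ^ d) ^ N = 1 := by
      rw [← hswap, hζ.pow_eq_one, one_zpow]
    exact (mul_eq_zero.mp (by rw [geom_sum_mul, hpow, sub_self])).resolve_right hne

theorem IsPrimitiveRoot.hasSum_comp_mul_add {K : Type*} [Field K] [CharZero K]
    [TopologicalSpace K] [IsTopologicalRing K] {ζ : K} {N : ℕ} (hN : N ≠ 0)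
    (hζ : IsPrimitiveRoot ζ N) {f : ℤ → K} {S : ℕ → K}
    (hS : ∀ k ∈ range N, HasSum (fun n : ℤ => f n * (ζ ^ k) ^ n) (S k)) (p : ℤ) :
    HasSum (fun ν : ℤ => f (N * ν + p)) ((N : K)⁻¹ * ∑ k ∈ range N, (ζ ^ k) ^ (-p) * S k) := by
  have hζ0 : ζ ≠ 0 := hζ.ne_zero hN
  have hfilter : ∀ n : ℤ, (N : K)⁻¹ * ∑ k ∈ range N, (ζ ^ k) ^ (-p) * (f n * (ζ ^ k) ^ n)
      = if (N : ℤ) ∣ n - p then f n else 0 := fun n => by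
    have : ∀ k ∈ range N, (ζ ^ k) ^ (-p) * (f n * (ζ ^ k) ^ n) = f n * (ζ ^ k) ^ (n - p) :=
      fun k _ => by rw [sub_eq_neg_add, zpow_add₀ (pow_ne_zero k hζ0)]; ring
    rw [sum_congr rfl this, ← mul_sum, hζ.sum_pow_zpow_eq_ite]
    split_ifs
    · field_simp
    · simp
  have hsum := (hasSum_sum fun k hk => (hS k hk).mul_left ((ζ ^ k) ^ (-p))).mul_left (N : K)⁻¹
  simp only [hfilter] at hsum
  have hinj : Function.Injective fun ν : ℤ => (N : ℤ) * ν + p := fun a b h => by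
    simpa [hN] using h
  refine ((hinj.hasSum_iff ?_).mpr hsum).congr_fun fun ν => ?_
  · rintro n hn
    rw [if_neg]
    rintro ⟨ν, hν⟩
    exact hn ⟨ν, by simp only; omega⟩
  · simp

theorem isPrimitiveRoot_exp_two_pi_I_div_three : IsPrimitiveRoot (exp (2 * π * I / 3)) 3 := by
  simpa using isPrimitiveRoot_exp 3 three_ne_zero

theorem exp_two_pi_I_div_three_sub_inv :
    exp (2 * π * I / 3) - (exp (2 * π * I / 3))⁻¹ = √3 * I := by
  have hsin : sin (2 * π / 3) = √3 / 2 := by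
    rw [show (2 * π / 3 : ℂ) = π - (π / 3 : ℝ) by push_cast; ring, sin_pi_sub, ← ofReal_sin,
      Real.sin_pi_div_three]
    push_cast; ring
  rw [← exp_neg, show 2 * π * I / 3 = (2 * π / 3 : ℂ) * I by ring, ← neg_mul, exp_mul_I,
    exp_mul_I, cos_neg, sin_neg, hsin]
  ring

theorem sum_range_three_zpow_mul_exp (x : ℂ) (p : ℤ) :
    ∑ k ∈ range 3, (exp (2 * π * I / 3) ^ k) ^ (-p)
        * exp (x / 2 * (exp (2 * π * I / 3) ^ k - (exp (2 * π * I / 3) ^ k)⁻¹))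
      = 1 + 2 * cos (x * √3 / 2 - 2 * π * p / 3) := by
  set ζ := exp (2 * π * I / 3) with hζ_def
  have hsq : ζ ^ 2 = ζ⁻¹ := eq_inv_of_mul_eq_one_left
    (by rw [← pow_succ, isPrimitiveRoot_exp_two_pi_I_div_three.pow_eq_one])
  set θ := x * √3 / 2 - 2 * π * p / 3
  have hθ : ζ ^ (-p) * exp (x / 2 * (ζ - ζ⁻¹)) = exp (θ * I) := by
    rw [exp_two_pi_I_div_three_sub_inv, hζ_def, ← exp_int_mul, ← exp_add]
    congr 1
    push_cast
    ring
  have hnegθ : ζ ^ p * exp (x / 2 * (ζ⁻¹ - ζ)) = exp (-θ * I) := by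
    rw [← neg_sub, exp_two_pi_I_div_three_sub_inv, hζ_def, ← exp_int_mul, ← exp_add]
    congr 1
    ring
  rw [sum_range_succ, sum_range_succ, sum_range_one, hsq, inv_zpow', neg_neg, inv_inv, pow_one,
    pow_zero, one_zpow, inv_one, sub_self, mul_zero, exp_zero, cos]
  linear_combination hθ + hnegθ

theorem stmt_6 (x : ℂ) (p : ℤ) :
    ∑' ν : ℤ, besselJ (3 * ν + p) x
      = (1 / 3) * (1 + 2 * Complex.cos (x * (Real.sqrt 3 : ℝ) / 2 - 2 * (π : ℂ) * (p : ℂ) / 3)) := by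
  have hζ := isPrimitiveRoot_exp_two_pi_I_div_three
  have hsum := hζ.hasSum_comp_mul_add three_ne_zero (f := fun n => besselJ n x)
    (fun k _ => hasSum_besselJ_mul_zpow x (pow_ne_zero k (hζ.ne_zero three_ne_zero))) p
  push_cast at hsum
  rw [hsum.tsum_eq, sum_range_three_zpow_mul_exp, one_div]
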